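/- Suppose a family of symmetric polynomials P_{g,n}(μ_1,…,μ_n) (depending on residues ⟨μ_i/r⟩) exists such that h_{g,μ} = b!·(∏_i μ_i^{⌊μ_i/r⌋}/⌊μ_i/r⌋!)·P_{g,n}(μ) where b = 2g-2+n+|μ|/r. Then the n-point generating function H_{g,n}(x_1,…,x_n) = ∑_μ (h_{g,μ}/b!)·∏ x_i^{μ_i} is, after the substitution x_i = z_i e^{-z_i^r}, a rational function of z_1,…,z_n (i.e., the generating series equals the expansion at z = 0 of a finite linear combination of products of the functions ((z/(1-rz^r)) d/dz)^j (z^η/(1-rz^r))). -/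

import Mathlib

open PowerSeries

noncomputable section

/-- The formal power series `exp(-z^r)`. -/
def expNegZr (r : ℕ) : PowerSeries ℚ :=
  PowerSeries.mk fun n => if r ∣ n then (-1 : ℚ)^(n/r) / (n/r).factorial else 0

/-- The spectral-curve coordinate `x(z) = z·e^{-z^r}` as a power series in `z`. -/
def xser (r : ℕ) : PowerSeries ℚ := X * expNegZr r

/-- The Euler operator `x·d/dx = (z/(1 - r z^r))·d/dz` on power series in `z`. -/
def eulerOp (r : ℕ) (f : PowerSeries ℚ) : PowerSeries ℚ :=
  X * (1 - C (r : ℚ) * X^r)⁻¹ * derivative ℚ f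

/-- The basic rational building blocks `((z/(1-rz^r)) d/dz)^j (z^η/(1-rz^r))`. -/
def basisFun (r η j : ℕ) : PowerSeries ℚ :=
  (eulerOp r)^[j] ((X : PowerSeries ℚ)^η * (1 - C (r : ℚ) * X^r)⁻¹)

/-!
Write `μᵢ = r σᵢ + ηᵢ` with residues `ηᵢ ∈ [1, r]`. Then `μ^⌊μ/r⌋ / ⌊μ/r⌋!` equals
`(rσ+η)^σ / σ!` (times `r` when `η = r`) and `P μ = P η`, so for each residue vector and each
monomial `μ^m` of `P η` the generating series is a product of one-variable series
`∑_σ (rσ+η)^(σ+m) / σ! · x^(rσ+η)`. Since `x d/dx` acts on `x^μ` as multiplication by `μ`, this is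
`(x d/dx)^m` of `∑_σ (rσ+η)^σ / σ! · x^(rσ+η) = z^η / (1 - r z^r)`. With `t = z^r`, the latter
identity says that the `N`-th coefficient of `∑_σ (cσ+e)^σ / σ! · t^σ e^{-(cσ+e)t}` is `c^N`,
which is the statement that the `N`-th finite difference of `σ ↦ (cσ+e)^N` is `N! c^N`.
All identities are proved modulo `z^(D+1)`, where only finitely many `σ` contribute.
-/

open Finset
open scoped Nat

namespace PowerSeries

variable {R : Type*} [CommRing R]

theorem derivative_rescale (a : R) (f : R⟦X⟧) :
    d⁄dX R (rescale a f) = C a * rescale a (d⁄dX R f) := by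
  ext n
  simp only [coeff_derivative, coeff_rescale, coeff_C_mul, pow_succ]
  ring

theorem derivative_expand {p : ℕ} (hp : p ≠ 0) (f : R⟦X⟧) :
    d⁄dX R (expand p hp f) = C (p : R) * X ^ (p - 1) * expand p hp (d⁄dX R f) := by
  rw [expand_apply, expand_apply, derivative_subst (HasSubst.X_pow hp), derivative_pow,
    derivative_X, map_natCast]
  ring

theorem expand_inv {k : Type*} [Field k] {p : ℕ} (hp : p ≠ 0) {f : k⟦X⟧}
    (hf : constantCoeff f ≠ 0) : expand p hp f⁻¹ = (expand p hp f)⁻¹ := by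
  rw [PowerSeries.eq_inv_iff_mul_eq_one (by rwa [constantCoeff_expand]), ← map_mul,
    PowerSeries.inv_mul_cancel _ hf, map_one]

theorem inv_one_sub_C_mul_X {k : Type*} [Field k] (c : k) :
    (1 - C c * X : k⟦X⟧)⁻¹ = rescale c (mk 1) := by
  rw [eq_comm, PowerSeries.eq_inv_iff_mul_eq_one (by simp), ← rescale_X, ← map_one (rescale c),
    ← map_sub, ← map_mul, mk_one_mul_one_sub_eq_one, map_one]

theorem X_pow_dvd_derivative {n : ℕ} {f : R⟦X⟧} (h : X ^ (n + 1) ∣ f) :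
    X ^ n ∣ d⁄dX R f := by
  obtain ⟨g, rfl⟩ := h
  rw [Derivation.leibniz, Derivation.leibniz_pow, Nat.add_sub_cancel, smul_eq_mul, smul_eq_mul,
    nsmul_eq_mul, smul_eq_mul]
  exact dvd_add (dvd_mul_of_dvd_left (pow_dvd_pow X n.le_succ) _)
    (dvd_mul_of_dvd_right (dvd_mul_of_dvd_right (dvd_mul_right _ _) _) _)

end PowerSeries

theorem sum_range_alternating_choose_mul_pow {K : Type*} [CommRing K] [IsDomain K] {c : K}
    (hc : c ≠ 0) (e : K) (N : ℕ) :
    ∑ k ∈ range (N + 1), (-1) ^ (N - k) * (N.choose k : K) * (c * k + e) ^ N = N ! * c ^ N := by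
  set P : Polynomial K := (Polynomial.C c * Polynomial.X + Polynomial.C e) ^ N
  have hdeg : P.natDegree = N := by
    rw [Polynomial.natDegree_pow, Polynomial.natDegree_linear hc, mul_one]
  have hlead : P.leadingCoeff = c ^ N := by
    rw [Polynomial.leadingCoeff_pow, Polynomial.leadingCoeff_linear hc]
  have h := congrFun P.fwdDiff_iter_degree_eq_factorial 0
  rw [hdeg, hlead, fwdDiff_iter_eq_sum_shift, Pi.smul_apply, Pi.natCast_apply, smul_eq_mul,
    mul_comm] at h
  rw [← h]
  refine Finset.sum_congr rfl fun k _ => ?_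
  simp [P]

theorem sum_range_pow_div_factorial_mul {K : Type*} [Field K] [CharZero K] {c : K} (hc : c ≠ 0)
    (e : K) (N : ℕ) :
    ∑ σ ∈ range (N + 1), (c * σ + e) ^ σ / σ ! * ((-(c * σ + e)) ^ (N - σ) / (N - σ)!) =
      c ^ N := by
  have hN : (N ! : K) ≠ 0 := Nat.cast_ne_zero.mpr N.factorial_ne_zero
  rw [← mul_div_cancel_left₀ (c ^ N) hN, ← sum_range_alternating_choose_mul_pow hc e N,
    Finset.sum_div]
  refine Finset.sum_congr rfl fun σ hσ => ?_
  have hσN : σ ≤ N := Nat.lt_succ_iff.mp (Finset.mem_range.mp hσ)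
  have hσ! : (σ ! : K) ≠ 0 := Nat.cast_ne_zero.mpr σ.factorial_ne_zero
  have hNσ! : ((N - σ)! : K) ≠ 0 := Nat.cast_ne_zero.mpr (N - σ).factorial_ne_zero
  rw [Nat.cast_choose K hσN, neg_pow]
  field_simp
  rw [← pow_add, Nat.add_sub_cancel' hσN]

theorem X_pow_dvd_inv_one_sub_sub_sum_rescale_exp {K : Type*} [Field K] [CharZero K] {c : K}
    (hc : c ≠ 0) (e : K) (D : ℕ) :
    X ^ (D + 1) ∣ (1 - C c * X)⁻¹ -
      ∑ σ ∈ range (D + 1), C ((c * σ + e) ^ σ / σ !) * X ^ σ * rescale (-(c * σ + e)) (exp K) := by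
  rw [X_pow_dvd_iff]
  intro N hN
  have hvanish : ∀ σ ∈ range (D + 1), σ ∉ range (N + 1) →
      coeff N (C ((c * σ + e) ^ σ / σ !) * X ^ σ * rescale (-(c * σ + e)) (exp K)) = 0 := by
    intro σ _ hσ
    rw [mul_assoc, coeff_C_mul, coeff_X_pow_mul', if_neg (by simpa using hσ), mul_zero]
  rw [map_sub, map_sum, ← Finset.sum_subset (Finset.range_subset_range.mpr (by omega)) hvanish,
    inv_one_sub_C_mul_X, coeff_rescale, coeff_mk, Pi.one_apply, mul_one,
    ← sum_range_pow_div_factorial_mul hc e N, sub_eq_zero]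
  refine Finset.sum_congr rfl fun σ hσ => ?_
  rw [mul_assoc, coeff_C_mul, coeff_X_pow_mul', if_pos (by simpa [Nat.lt_succ_iff] using hσ),
    coeff_rescale, coeff_exp, map_div₀, map_one, map_natCast, mul_one_div]

theorem MvPolynomial.eval_eq_sum_of_support_subset {R σ : Type*} [CommSemiring R] [Fintype σ]
    (p : MvPolynomial σ R) (x : σ → R) {K : Finset (σ → ℕ)} (hK : ∀ m ∈ p.support, ⇑m ∈ K) :
    MvPolynomial.eval x p =
      ∑ m ∈ K, MvPolynomial.coeff (Finsupp.equivFunOnFinite.symm m) p * ∏ i, x i ^ m i := by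
  classical
  have hinj : Set.InjOn (fun m : σ →₀ ℕ => ⇑m) p.support :=
    fun _ _ _ _ h => DFunLike.coe_injective h
  rw [MvPolynomial.eval_eq', ← Finset.sum_subset (s₁ := p.support.image (⇑))
      (by simpa [Finset.image_subset_iff] using hK), Finset.sum_image hinj]
  · simp
  · intro m _ hm
    rw [MvPolynomial.notMem_support_iff.mp fun h => hm (Finset.mem_image.mpr ⟨_, h, by simp⟩),
      zero_mul]

theorem Nat.mul_add_sub_one_div_and_mod {r σ η : ℕ} (hη : η ∈ Icc 1 r) :
    (r * σ + η - 1) / r = σ ∧ (r * σ + η - 1) % r + 1 = η := by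
  obtain ⟨h1, h2⟩ := Finset.mem_Icc.mp hη
  rw [show r * σ + η - 1 = η - 1 + r * σ by omega, Nat.add_mul_div_left _ _ (by omega),
    Nat.add_mul_mod_self_left, Nat.div_eq_of_lt (by omega), Nat.mod_eq_of_lt (by omega)]
  omega

theorem Nat.dvd_sum_mul_add_iff {ι : Type*} [Fintype ι] {r : ℕ} (σ η : ι → ℕ) :
    r ∣ ∑ i, (r * σ i + η i) ↔ r ∣ ∑ i, η i := by
  rw [Finset.sum_add_distrib, ← Finset.mul_sum]
  exact Nat.dvd_add_right (dvd_mul_right _ _)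

theorem sum_piFinset_range_eq_sum_residues {M ι : Type*} [AddCommMonoid M] [Fintype ι]
    [DecidableEq ι] {r : ℕ} (hr : r ≠ 0) (D : ι → ℕ) (F : (ι → ℕ) → M)
    (hF : ∀ μ, F μ ≠ 0 → ∀ i, 1 ≤ μ i ∧ μ i ≤ D i) :
    ∑ μ ∈ Fintype.piFinset (fun i => range (D i + 1)), F μ =
      ∑ η ∈ Fintype.piFinset (fun _ => Icc 1 r),
        ∑ σ ∈ Fintype.piFinset (fun i => range (D i + 1)), F (fun i => r * σ i + η i) := by
  refine Eq.trans ?_ (Finset.sum_product _ _ fun p : (ι → ℕ) × (ι → ℕ) =>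
    F fun i => r * p.2 i + p.1 i)
  symm
  refine Finset.sum_bij_ne_zero (fun p _ _ i => r * p.2 i + p.1 i) ?_ ?_ ?_ (fun _ _ _ => rfl)
  · intro p _ hp
    simpa [Nat.lt_succ_iff] using fun i => (hF _ hp i).2
  · intro p hp _ q hq _ hpq
    simp only [Finset.mem_product, Fintype.mem_piFinset] at hp hq
    have key := fun i => congrFun hpq i
    ext i
    · rw [← (Nat.mul_add_sub_one_div_and_mod (hp.1 i)).2,
        ← (Nat.mul_add_sub_one_div_and_mod (hq.1 i)).2, key i]
    · rw [← (Nat.mul_add_sub_one_div_and_mod (σ := p.2 i) (hp.1 i)).1,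
        ← (Nat.mul_add_sub_one_div_and_mod (σ := q.2 i) (hq.1 i)).1, key i]
  · intro μ _ hμ
    have hpos : 0 < r := Nat.pos_of_ne_zero hr
    have hdecomp : (fun i => r * ((μ i - 1) / r) + ((μ i - 1) % r + 1)) = μ := by
      funext i
      have := Nat.div_add_mod (μ i - 1) r
      have := (hF μ hμ i).1
      omega
    refine ⟨(fun i => (μ i - 1) % r + 1, fun i => (μ i - 1) / r), ?_, by rwa [hdecomp], hdecomp⟩
    simp only [Finset.mem_product, Fintype.mem_piFinset, Finset.mem_Icc, Finset.mem_range]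
    refine ⟨fun i => ⟨by omega, Nat.mod_lt _ hpos⟩, fun i => ?_⟩
    have := Nat.div_le_self (μ i - 1) r
    have := hF μ hμ i
    omega

theorem pow_div_div_factorial_mul_add {r η : ℕ} (hη : η ∈ Icc 1 r) (σ : ℕ) :
    ((r * σ + η : ℕ) : ℚ) ^ ((r * σ + η) / r) / ((r * σ + η) / r)! =
      (if η = r then (r : ℚ) else 1) * (((r * σ + η : ℕ) : ℚ) ^ σ / σ !) := by
  obtain ⟨h1, h2⟩ := Finset.mem_Icc.mp hη
  split_ifs with hηr
  · subst hηr
    rw [show η * σ + η = η * (σ + 1) by ring, Nat.mul_div_cancel_left _ (by omega),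
      Nat.factorial_succ]
    push_cast
    field_simp
    ring
  · rw [show r * σ + η = η + r * σ by ring, Nat.add_mul_div_left _ _ (by omega),
      Nat.div_eq_of_lt (by omega), zero_add, one_mul]

section

variable {r : ℕ}

theorem expNegZr_eq_expand (hr : r ≠ 0) : expNegZr r = expand r hr (rescale (-1) (exp ℚ)) := by
  ext n
  simp only [expNegZr, coeff_mk, coeff_expand, coeff_rescale, coeff_exp]
  split_ifs <;> simp [div_eq_mul_inv]

theorem xser_pow (hr : r ≠ 0) (m : ℕ) :
    xser r ^ m = X ^ m * expand r hr (rescale (-(m : ℚ)) (exp ℚ)) := by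
  rw [xser, mul_pow, expNegZr_eq_expand hr, ← map_pow, ← map_pow, exp_pow_eq_rescale_exp,
    rescale_rescale, mul_neg_one]

theorem coeff_xser_pow_of_lt {d m : ℕ} (h : d < m) : coeff d (xser r ^ m) = 0 :=
  X_pow_dvd_iff.mp (pow_dvd_pow_of_dvd (dvd_mul_right X _) m) d h

theorem derivative_xser (hr : r ≠ 0) :
    d⁄dX ℚ (xser r) = (1 - C (r : ℚ) * X ^ r) * expNegZr r := by
  have hX : (X : ℚ⟦X⟧) * X ^ (r - 1) = X ^ r := by rw [← pow_succ', Nat.sub_add_cancel (by omega)]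
  rw [xser, Derivation.leibniz, expNegZr_eq_expand hr, derivative_expand, derivative_rescale,
    derivative_exp, map_mul, expand_C, derivative_X, smul_eq_mul, smul_eq_mul, ← hX, map_neg,
    map_one]
  ring

theorem eulerOp_xser_pow (hr : r ≠ 0) (m : ℕ) :
    eulerOp r (xser r ^ m) = (m : ℚ) • xser r ^ m := by
  have hunit : (1 - C (r : ℚ) * X ^ r)⁻¹ * (1 - C (r : ℚ) * X ^ r) = 1 :=
    PowerSeries.inv_mul_cancel _ (by simp [zero_pow hr])
  rcases m with _ | m
  · simp [eulerOp]
  rw [eulerOp, derivative_pow, derivative_xser hr, smul_eq_C_mul, Nat.add_sub_cancel,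
    pow_succ _ m, xser, show C ((m + 1 : ℕ) : ℚ) = ((m + 1 : ℕ) : ℚ⟦X⟧) from map_natCast C _]
  linear_combination (↑(m + 1) : ℚ⟦X⟧) * (X * expNegZr r) ^ m * X * expNegZr r * hunit

theorem eulerOp_sum_smul {α : Type*} (s : Finset α) (a : α → ℚ) (f : α → ℚ⟦X⟧) :
    eulerOp r (∑ i ∈ s, a i • f i) = ∑ i ∈ s, a i • eulerOp r (f i) := by
  simp only [eulerOp, map_sum, Derivation.map_smul, Finset.mul_sum, mul_smul_comm]

theorem X_pow_dvd_eulerOp_sub {n : ℕ} {f g : ℚ⟦X⟧} (h : X ^ n ∣ f - g) :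
    X ^ n ∣ eulerOp r f - eulerOp r g := by
  have hsub : eulerOp r f - eulerOp r g = X * ((1 - C (r : ℚ) * X ^ r)⁻¹ * d⁄dX ℚ (f - g)) := by
    rw [eulerOp, eulerOp, map_sub]
    ring
  rcases n with _ | n
  · exact one_dvd _
  rw [hsub, pow_succ']
  exact mul_dvd_mul_left X (dvd_mul_of_dvd_right (X_pow_dvd_derivative h) _)

/-- Truncation at `σ ≤ D` of the expansion of `basisFun r η k` in powers of `x = xser r`. -/
def xPartialSum (r η k D : ℕ) : ℚ⟦X⟧ :=
  ∑ σ ∈ range (D + 1), (((r * σ + η : ℕ) : ℚ) ^ (σ + k) / σ !) • xser r ^ (r * σ + η)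

theorem eulerOp_xPartialSum (hr : r ≠ 0) (η k D : ℕ) :
    eulerOp r (xPartialSum r η k D) = xPartialSum r η (k + 1) D := by
  rw [xPartialSum, xPartialSum, eulerOp_sum_smul]
  refine Finset.sum_congr rfl fun σ _ => ?_
  rw [eulerOp_xser_pow hr, smul_smul, ← add_assoc, pow_succ, div_mul_eq_mul_div]

theorem X_pow_dvd_basisFun_zero_sub_xPartialSum (hr : r ≠ 0) (η D : ℕ) :
    X ^ (D + 1) ∣ basisFun r η 0 - xPartialSum r η 0 D := by
  have hc : (r : ℚ) ≠ 0 := Nat.cast_ne_zero.mpr hr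
  have hbasis : basisFun r η 0 = X ^ η * expand r hr (1 - C (r : ℚ) * X)⁻¹ := by
    rw [basisFun, Function.iterate_zero, id, expand_inv hr (by simp), map_sub, map_one,
      map_mul, expand_C, expand_X]
  have hsum : xPartialSum r η 0 D = X ^ η * expand r hr (∑ σ ∈ range (D + 1),
      C (((r : ℚ) * σ + η) ^ σ / σ !) * X ^ σ * rescale (-((r : ℚ) * σ + η)) (exp ℚ)) := by
    rw [xPartialSum, map_sum, Finset.mul_sum]
    refine Finset.sum_congr rfl fun σ _ => ?_
    rw [xser_pow hr, map_mul, map_mul, expand_C, map_pow, expand_X, smul_eq_C_mul, add_zero]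
    push_cast
    ring
  have hexpand : X ^ (D + 1) ∣ expand r hr (X ^ (D + 1) : ℚ⟦X⟧) := by
    rw [map_pow, expand_X, ← pow_mul]
    exact pow_dvd_pow X (Nat.le_mul_of_pos_left _ (Nat.pos_of_ne_zero hr))
  rw [hbasis, hsum, ← mul_sub, ← map_sub]
  exact dvd_mul_of_dvd_right (hexpand.trans (map_dvd _
    (X_pow_dvd_inv_one_sub_sub_sum_rescale_exp hc (η : ℚ) D))) _

theorem X_pow_dvd_basisFun_sub_xPartialSum (hr : r ≠ 0) (η k D : ℕ) :
    X ^ (D + 1) ∣ basisFun r η k - xPartialSum r η k D := by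
  induction k with
  | zero => exact X_pow_dvd_basisFun_zero_sub_xPartialSum hr η D
  | succ k ih =>
    rw [basisFun, Function.iterate_succ_apply', ← basisFun, ← eulerOp_xPartialSum hr]
    exact X_pow_dvd_eulerOp_sub ih

theorem coeff_basisFun (hr : r ≠ 0) (η k d : ℕ) :
    coeff d (basisFun r η k) = ∑ σ ∈ range (d + 1),
      ((r * σ + η : ℕ) : ℚ) ^ (σ + k) / σ ! * coeff d (xser r ^ (r * σ + η)) := by
  have h := X_pow_dvd_iff.mp (X_pow_dvd_basisFun_sub_xPartialSum hr η k d) d d.lt_succ_self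
  rw [map_sub, sub_eq_zero] at h
  simp only [h, xPartialSum, map_sum, coeff_smul, smul_eq_mul]

/-- The coefficient `h_{g,μ} / b!` of `∏ xᵢ^μᵢ` given by the quasi-polynomiality formula. -/
def quasiPolyCoeff {n : ℕ} (r : ℕ) (P : (Fin n → ℕ) → MvPolynomial (Fin n) ℚ) (μ : Fin n → ℕ) : ℚ :=
  if (∀ i, 1 ≤ μ i) ∧ r ∣ ∑ i, μ i then
    (∏ i, (μ i : ℚ) ^ (μ i / r) / (μ i / r)!) * MvPolynomial.eval (fun i => (μ i : ℚ)) (P μ)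
  else 0

variable {n : ℕ} {P : (Fin n → ℕ) → MvPolynomial (Fin n) ℚ}

theorem quasiPolyCoeff_mul_add (hP : ∀ μ ν : Fin n → ℕ, (∀ i, μ i % r = ν i % r) → P μ = P ν)
    {η : Fin n → ℕ} (hη : η ∈ Fintype.piFinset fun _ => Icc 1 r) (hdvd : r ∣ ∑ i, η i)
    {K : Finset (Fin n → ℕ)} (hK : ∀ m ∈ (P η).support, ⇑m ∈ K) (σ : Fin n → ℕ) :
    quasiPolyCoeff r P (fun i => r * σ i + η i) =
      ∑ m ∈ K, MvPolynomial.coeff (Finsupp.equivFunOnFinite.symm m) (P η) *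
        (∏ i, if η i = r then (r : ℚ) else 1) *
        ∏ i, ((r * σ i + η i : ℕ) : ℚ) ^ (σ i + m i) / (σ i)! := by
  rw [Fintype.mem_piFinset] at hη
  have hpos : ∀ i, 1 ≤ r * σ i + η i := fun i => le_add_left (Finset.mem_Icc.mp (hη i)).1
  rw [quasiPolyCoeff, if_pos ⟨hpos, (Nat.dvd_sum_mul_add_iff σ η).mpr hdvd⟩,
    hP _ η fun i => by simp, MvPolynomial.eval_eq_sum_of_support_subset _ _ hK, Finset.mul_sum]
  refine Finset.sum_congr rfl fun m _ => ?_
  simp only [pow_div_div_factorial_mul_add (hη _), pow_add, mul_div_right_comm,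
    Finset.prod_mul_distrib]
  ring

theorem sum_quasiPolyCoeff_mul_add_mul_prod_coeff (hr : r ≠ 0)
    (hP : ∀ μ ν : Fin n → ℕ, (∀ i, μ i % r = ν i % r) → P μ = P ν)
    {η : Fin n → ℕ} (hη : η ∈ Fintype.piFinset fun _ => Icc 1 r) (hdvd : r ∣ ∑ i, η i)
    {K : Finset (Fin n → ℕ)} (hK : ∀ m ∈ (P η).support, ⇑m ∈ K) (d : Fin n → ℕ) :
    ∑ σ ∈ Fintype.piFinset (fun i => range (d i + 1)), quasiPolyCoeff r P (fun i => r * σ i + η i) *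
        ∏ i, coeff (d i) (xser r ^ (r * σ i + η i)) =
      ∑ m ∈ K, MvPolynomial.coeff (Finsupp.equivFunOnFinite.symm m) (P η) *
        (∏ i, if η i = r then (r : ℚ) else 1) * ∏ i, coeff (d i) (basisFun r (η i) (m i)) := by
  simp only [quasiPolyCoeff_mul_add hP hη hdvd hK, Finset.sum_mul]
  rw [Finset.sum_comm]
  refine Finset.sum_congr rfl fun m _ => ?_
  simp only [coeff_basisFun hr, Finset.prod_univ_sum, Finset.mul_sum, mul_assoc,
    Finset.prod_mul_distrib]

theorem exists_sum_quasiPolyCoeff_mul_prod_coeff_eq (hr : r ≠ 0)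
    (hP : ∀ μ ν : Fin n → ℕ, (∀ i, μ i % r = ν i % r) → P μ = P ν) :
    ∃ (T : Finset ((Fin n → ℕ) × (Fin n → ℕ))) (coef : (Fin n → ℕ) × (Fin n → ℕ) → ℚ),
      ∀ d : Fin n → ℕ,
        ∑ μ ∈ Fintype.piFinset (fun i => range (d i + 1)),
            quasiPolyCoeff r P μ * ∏ i, coeff (d i) (xser r ^ μ i) =
          ∑ t ∈ T, coef t * ∏ i, coeff (d i) (basisFun r (t.1 i) (t.2 i)) := by
  classical
  set residues := Fintype.piFinset fun _ : Fin n => Icc 1 r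
  set K := residues.biUnion fun η => (P η).support.image (⇑)
  refine ⟨residues ×ˢ K, fun t => if r ∣ ∑ i, t.1 i then
    MvPolynomial.coeff (Finsupp.equivFunOnFinite.symm t.2) (P t.1) *
      ∏ i, (if t.1 i = r then (r : ℚ) else 1) else 0, fun d => ?_⟩
  have hvanish : ∀ μ, quasiPolyCoeff r P μ * ∏ i, coeff (d i) (xser r ^ μ i) ≠ 0 →
      ∀ i, 1 ≤ μ i ∧ μ i ≤ d i := by
    intro μ hμ i
    by_contra hi
    rcases not_and_or.mp hi with h0 | hd
    · exact hμ (by rw [quasiPolyCoeff, if_neg fun h => h0 (h.1 i), zero_mul])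
    · exact hμ (by rw [Finset.prod_eq_zero (Finset.mem_univ i)
        (coeff_xser_pow_of_lt (not_le.mp hd)), mul_zero])
  rw [sum_piFinset_range_eq_sum_residues hr d _ hvanish, Finset.sum_product]
  refine Finset.sum_congr rfl fun η hη => ?_
  by_cases hdvd : r ∣ ∑ i, η i
  · have hK : ∀ m ∈ (P η).support, ⇑m ∈ K := fun m hm =>
      Finset.mem_biUnion.mpr ⟨η, hη, Finset.mem_image_of_mem _ hm⟩
    simp only [if_pos hdvd, sum_quasiPolyCoeff_mul_add_mul_prod_coeff hr hP hη hdvd hK]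
  · refine (Finset.sum_eq_zero fun σ _ => ?_).trans (Finset.sum_eq_zero fun t _ => ?_).symm
    · rw [quasiPolyCoeff, if_neg fun h => hdvd ((Nat.dvd_sum_mul_add_iff σ η).mp h.2), zero_mul]
    · simp only [if_neg hdvd, zero_mul]

end

open Classical in
theorem stmt_18_general (r n g : ℕ) (hr : 1 ≤ r)
    (h : (Fin n → ℕ) → ℚ)
    (P : (Fin n → ℕ) → MvPolynomial (Fin n) ℚ)
    (hP : ∀ μ ν : Fin n → ℕ, (∀ i, μ i % r = ν i % r) → P μ = P ν)
    (hquasi : ∀ μ : Fin n → ℕ, (∀ i, 1 ≤ μ i) → r ∣ ∑ i, μ i →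
      h μ = ((2*g + n + (∑ i, μ i)/r - 2).factorial : ℚ)
            * (∏ i, ((μ i : ℚ))^(μ i / r) / ((μ i / r).factorial : ℚ))
            * MvPolynomial.eval (fun i => (μ i : ℚ)) (P μ)) :
    ∃ (T : Finset ((Fin n → ℕ) × (Fin n → ℕ))) (coef : (Fin n → ℕ) × (Fin n → ℕ) → ℚ),
      ∀ d : Fin n → ℕ,
        (∑ μ ∈ Fintype.piFinset (fun i => Finset.range (d i + 1)),
          if (∀ i, 1 ≤ μ i) ∧ r ∣ ∑ i, μ i then
            (h μ / ((2*g + n + (∑ i, μ i)/r - 2).factorial : ℚ))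
              * ∏ i, PowerSeries.coeff (d i) ((xser r)^(μ i))
          else 0)
        = ∑ t ∈ T, coef t * ∏ i, PowerSeries.coeff (d i) (basisFun r (t.1 i) (t.2 i)) := by
  obtain ⟨T, coef, hT⟩ :=
    exists_sum_quasiPolyCoeff_mul_prod_coeff_eq (Nat.one_le_iff_ne_zero.mp hr) hP
  refine ⟨T, coef, fun d => ?_⟩
  rw [← hT d]
  refine Finset.sum_congr rfl fun μ _ => ?_
  rw [quasiPolyCoeff]
  split_ifs with hμ
  · rw [hquasi μ hμ.1 hμ.2, mul_assoc,
      mul_div_cancel_left₀ _ (Nat.cast_ne_zero.mpr (Nat.factorial_ne_zero _))]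
  · rw [zero_mul]

open Classical in
/-- Quasi-polynomiality implies rationality of the `n`-point generating function:
if `h_{g,μ} = b!·(∏ μ_i^{⌊μ_i/r⌋}/⌊μ_i/r⌋!)·P(μ)` with `b = 2g-2+n+|μ|/r` and `P`
a polynomial whose coefficients depend only on the residues `μ_i mod r`, then
`H_{g,n}(x₁,…,x_n) = ∑_μ (h_{g,μ}/b!) ∏ x_i^{μ_i}`, after `x_i = z_i e^{-z_i^r}`,
is (coefficientwise in `z₁,…,z_n`) a finite linear combination of products of the
functions `((z/(1-rz^r)) d/dz)^j (z^η/(1-rz^r))`. -/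
theorem stmt_18 (r n g : ℕ) (hr : 1 ≤ r) (hstab : 2 < 2*g + n)
    (h : (Fin n → ℕ) → ℚ)
    (P : (Fin n → ℕ) → MvPolynomial (Fin n) ℚ)
    (hP : ∀ μ ν : Fin n → ℕ, (∀ i, μ i % r = ν i % r) → P μ = P ν)
    (hquasi : ∀ μ : Fin n → ℕ, (∀ i, 1 ≤ μ i) → r ∣ ∑ i, μ i →
      h μ = ((2*g + n + (∑ i, μ i)/r - 2).factorial : ℚ)
            * (∏ i, ((μ i : ℚ))^(μ i / r) / ((μ i / r).factorial : ℚ))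
            * MvPolynomial.eval (fun i => (μ i : ℚ)) (P μ)) :
    ∃ (T : Finset ((Fin n → ℕ) × (Fin n → ℕ))) (coef : (Fin n → ℕ) × (Fin n → ℕ) → ℚ),
      ∀ d : Fin n → ℕ,
        (∑ μ ∈ Fintype.piFinset (fun i => Finset.range (d i + 1)),
          if (∀ i, 1 ≤ μ i) ∧ r ∣ ∑ i, μ i then
            (h μ / ((2*g + n + (∑ i, μ i)/r - 2).factorial : ℚ))
              * ∏ i, PowerSeries.coeff (d i) ((xser r)^(μ i))
          else 0)
        = ∑ t ∈ T, coef t * ∏ i, PowerSeries.coeff (d i) (basisFun r (t.1 i) (t.2 i)) :=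
  stmt_18_general r n g hr h P hP hquasi

end
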